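/- Let a > 0. For every nonnegative integer n and every real x, ∑_{i=0}^{n} A_i(x) Δ^i C_n^{(a)}(x) = (-1)^{n-1} C_n^{(a)}(0) C_{n-1}^{(a)}(x-2), where A_0 = (-1)^{n-1} C_{n-1}^{(a)}(-2) and, for i ≥ 1, A_i(x) = ∑_{k=1}^i (-1)^k C_{i-k}^{(-a)}(-x+1) [C_k^{(a)}(-1) C_k^{(a)}(x-2) − C_k^{(a)}(-2) C_k^{(a)}(x-1)]. -/

import Mathlib

/-- Generalized binomial coefficient `x(x-1)⋯(x-k+1)/k!`. -/
noncomputable def genChoose (x : ℝ) (k : ℕ) : ℝ :=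
  (∏ j ∈ Finset.range k, (x - (j : ℝ))) / (Nat.factorial k : ℝ)

/-- The Charlier polynomial `C_n^{(a)}(x) = ∑_{k=0}^n (x choose k) (-a)^{n-k}/(n-k)!`. -/
noncomputable def charlier (a : ℝ) (n : ℕ) (x : ℝ) : ℝ :=
  ∑ k ∈ Finset.range (n + 1),
    genChoose x k * (-a) ^ (n - k) / (Nat.factorial (n - k) : ℝ)

/-- Charlier polynomial with integer index, with the convention `C_{-1}^{(a)} ≡ 0`. -/
noncomputable def charlierZ (a : ℝ) (n : ℤ) (x : ℝ) : ℝ :=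
  if 0 ≤ n then charlier a n.toNat x else 0

/-- Forward difference operator `Δf(x) = f(x+1) - f(x)`. -/
def fdiff (f : ℝ → ℝ) : ℝ → ℝ := fun x => f (x + 1) - f x

/-- Backward difference operator `∇f(x) = f(x) - f(x-1)`. -/
def bdiff (f : ℝ → ℝ) : ℝ → ℝ := fun x => f x - f (x - 1)

/-- The generalized Charlier polynomial
`C_n^{a,N}(x) = [1 + N(-1)^n C_n^{(a)}(-1)] C_n^{(a)}(x) - N(-1)^n C_n^{(a)}(0) C_n^{(a)}(x-1)`. -/
noncomputable def genCharlier (a N : ℝ) (n : ℕ) (x : ℝ) : ℝ :=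
  (1 + N * (-1) ^ n * charlier a n (-1)) * charlier a n x
    - N * (-1) ^ n * charlier a n 0 * charlier a n (x - 1)

/-- The coefficient `A_i(x)` (for `i ≥ 1`) of the difference equation. -/
noncomputable def Acoef (a : ℝ) (i : ℕ) (x : ℝ) : ℝ :=
  ∑ k ∈ Finset.Icc 1 i, (-1 : ℝ) ^ k * charlier (-a) (i - k) (-x + 1) *
    (charlier a k (-1) * charlier a k (x - 2) - charlier a k (-2) * charlier a k (x - 1))

/-- The coefficient `A_0 = (-1)^{n-1} C_{n-1}^{(a)}(-2)` (with `C_{-1}^{(a)} ≡ 0`). -/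
noncomputable def A0coef (a : ℝ) (n : ℕ) : ℝ :=
  (-1 : ℝ) ^ ((n : ℤ) - 1) * charlierZ a ((n : ℤ) - 1) (-2)

/-!
Write `(1 + t)^x = ∑ (x choose k) t^k`. The Charlier polynomials have generating function
`∑ C_n^{(a)}(x) t^n = (1 + t)^x e^{-a t}`, so the product of the generating functions of
`C_n^{(a)}(x)` and of `C_n^{(-a)}(1 - x)` is `1 + t`. The `A_i(x)` are the coefficients of the
product of the second one with `∑ (-1)^k D_k(x) t^k`, where `D_k(x)` is the bracket in `A_i`, so
`∑_i A_i(x) C_{n-i}^{(a)}(x)` collapses to `(-1)^n (D_n(x) - D_{n-1}(x))`. As `Δ^i C_n = C_{n-i}`,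
the theorem reduces to an identity between the brackets of a function and of its forward difference.
-/

open Finset PowerSeries

section BinomialSeries

variable {R : Type*} [CommRing R] [BinomialRing R]

noncomputable def chooseSeries (r : R) : R⟦X⟧ := mk (Ring.choose r)

theorem chooseSeries_add (r s : R) : chooseSeries (r + s) = chooseSeries r * chooseSeries s := by
  ext k
  simp only [chooseSeries, coeff_mul, coeff_mk]
  exact Ring.add_choose_eq k (Commute.all r s)

theorem chooseSeries_one : chooseSeries (1 : R) = 1 + X := by
  ext k
  have h : Ring.choose (1 : R) k = (Nat.choose 1 k : R) := by
    simpa using Ring.choose_natCast (R := R) 1 k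
  rw [chooseSeries, coeff_mk, h]
  rcases k with _ | _ | k <;> simp [coeff_X, Nat.choose_eq_zero_of_lt]

end BinomialSeries

theorem genChoose_eq_choose (x : ℝ) (k : ℕ) : genChoose x k = Ring.choose x k := by
  rw [Ring.choose_eq_smul, ← Polynomial.aeval_eq_smeval, Polynomial.aeval_def,
    Polynomial.eval₂_eq_eval_map, descPochhammer_map, descPochhammer_eval_eq_prod_range,
    genChoose, smul_eq_mul, div_eq_inv_mul]

noncomputable def charlierSeries (a x : ℝ) : ℝ⟦X⟧ := mk fun n ↦ charlier a n x

theorem charlierSeries_eq (a x : ℝ) :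
    charlierSeries a x = chooseSeries x * rescale (-a) (exp ℝ) := by
  ext n
  rw [charlierSeries, coeff_mk, coeff_mul, Nat.sum_antidiagonal_eq_sum_range_succ
    (fun i j ↦ coeff i (chooseSeries x) * coeff j (rescale (-a) (exp ℝ))), charlier]
  refine sum_congr rfl fun k _ ↦ ?_
  simp [chooseSeries, genChoose_eq_choose, coeff_exp, div_eq_mul_inv]
  ring

theorem charlierSeries_mul_charlierSeries_neg (a x y : ℝ) :
    charlierSeries a x * charlierSeries (-a) y = chooseSeries (x + y) := by
  rw [charlierSeries_eq, charlierSeries_eq, neg_neg, chooseSeries_add,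
    mul_mul_mul_comm, exp_mul_exp_eq_exp_add, neg_add_cancel, rescale_zero]
  simp

theorem charlierSeries_add_one (a x : ℝ) :
    charlierSeries a (x + 1) = (1 + X) * charlierSeries a x := by
  rw [charlierSeries_eq, charlierSeries_eq, chooseSeries_add, chooseSeries_one]
  ring

theorem charlier_zero (a x : ℝ) : charlier a 0 x = 1 := by
  simp [charlier, genChoose]

theorem fdiff_charlier (a : ℝ) (n : ℕ) : fdiff (charlier a (n + 1)) = charlier a n := by
  funext x
  have h := congrArg (coeff (n + 1)) (charlierSeries_add_one a x)
  simp only [charlierSeries, add_mul, one_mul, map_add, coeff_succ_X_mul, coeff_mk] at h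
  simp [fdiff, h]

theorem iterate_fdiff_charlier (a : ℝ) {n i : ℕ} (h : i ≤ n) :
    fdiff^[i] (charlier a n) = charlier a (n - i) := by
  induction i with
  | zero => rfl
  | succ i ih =>
    rw [Function.iterate_succ_apply', ih (by omega), show n - i = n - (i + 1) + 1 by omega,
      fdiff_charlier]

def crossDiff (f : ℝ → ℝ) (x : ℝ) : ℝ := f (-1) * f (x - 2) - f (-2) * f (x - 1)

theorem crossDiff_fdiff (f : ℝ → ℝ) (x : ℝ) :
    crossDiff (fdiff f) x - crossDiff f x = f 0 * fdiff f (x - 2) - fdiff f (-2) * f x := by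
  simp only [crossDiff, fdiff]
  ring_nf

theorem Acoef_eq_coeff (a : ℝ) (i : ℕ) (x : ℝ) :
    Acoef a i x = coeff i (mk (fun k ↦ (-1) ^ k * crossDiff (charlier a k) x) *
      charlierSeries (-a) (-x + 1)) := by
  rw [coeff_mul, Nat.sum_antidiagonal_eq_sum_range_succ (fun k j ↦ coeff k _ * coeff j _),
    range_eq_Ico, sum_eq_sum_Ico_succ_bot (Nat.succ_pos i), Nat.succ_eq_add_one,
    Ico_add_one_right_eq_Icc]
  simp [Acoef, crossDiff, charlierSeries, charlier_zero, mul_right_comm]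

theorem sum_Acoef_mul_charlier (a : ℝ) (n : ℕ) (x : ℝ) :
    ∑ i ∈ range (n + 2), Acoef a i x * charlier a (n + 1 - i) x =
      (-1) ^ (n + 1) * crossDiff (charlier a (n + 1)) x + (-1) ^ n * crossDiff (charlier a n) x := by
  have hC : ∀ i, charlier a (n + 1 - i) x = coeff (n + 1 - i) (charlierSeries a x) :=
    fun _ ↦ by rw [charlierSeries, coeff_mk]
  simp_rw [Acoef_eq_coeff, hC]
  rw [← Nat.sum_antidiagonal_eq_sum_range_succ (fun i j ↦ coeff i _ * coeff j _),
    ← coeff_mul, mul_assoc, mul_comm (charlierSeries _ _), charlierSeries_mul_charlierSeries_neg,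
    add_neg_cancel_left, chooseSeries_one, mul_add, mul_one, map_add, coeff_succ_mul_X]
  simp only [coeff_mk]

theorem Acoef_zero (a x : ℝ) : Acoef a 0 x = 0 := by
  simp [Acoef]

theorem charlierZ_natCast (a : ℝ) (n : ℕ) (x : ℝ) : charlierZ a n x = charlier a n x := by
  simp [charlierZ]

theorem A0coef_succ (a : ℝ) (n : ℕ) : A0coef a (n + 1) = (-1) ^ n * charlier a n (-2) := by
  rw [A0coef, Nat.cast_succ, add_sub_cancel_right, zpow_natCast, charlierZ_natCast]

theorem charlier_Acoef_sum_eq_general (a : ℝ) (n : ℕ) (x : ℝ) :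
    ∑ i ∈ Finset.range (n + 1),
        (if i = 0 then A0coef a n else Acoef a i x) * fdiff^[i] (charlier a n) x
      = (-1 : ℝ) ^ ((n : ℤ) - 1) * charlier a n 0 * charlierZ a ((n : ℤ) - 1) (x - 2) := by
  rw [sum_congr rfl fun i hi ↦ by rw [iterate_fdiff_charlier a (mem_range_succ_iff.mp hi)]]
  rcases n with _ | n
  · simp [A0coef, charlierZ]
  have hsplit : ∑ i ∈ range (n + 2),
      (if i = 0 then A0coef a (n + 1) else Acoef a i x) * charlier a (n + 1 - i) x =
      A0coef a (n + 1) * charlier a (n + 1) x +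
        ∑ i ∈ range (n + 2), Acoef a i x * charlier a (n + 1 - i) x := by
    simp [sum_range_succ' _ (n + 1), Acoef_zero, add_comm]
  rw [hsplit, sum_Acoef_mul_charlier, A0coef_succ, Nat.cast_succ, add_sub_cancel_right,
    zpow_natCast, charlierZ_natCast, ← fdiff_charlier a n]
  linear_combination (-1) ^ n * crossDiff_fdiff (charlier a (n + 1)) x

/-- `∑_{i=0}^n A_i(x) Δ^i C_n^{(a)}(x) = (-1)^{n-1} C_n^{(a)}(0) C_{n-1}^{(a)}(x-2)`
(with the convention `C_{-1}^{(a)} ≡ 0`). -/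
theorem charlier_Acoef_sum_eq (a : ℝ) (ha : 0 < a) (n : ℕ) (x : ℝ) :
    ∑ i ∈ Finset.range (n + 1),
        (if i = 0 then A0coef a n else Acoef a i x) * fdiff^[i] (charlier a n) x
      = (-1 : ℝ) ^ ((n : ℤ) - 1) * charlier a n 0 * charlierZ a ((n : ℤ) - 1) (x - 2) :=
  charlier_Acoef_sum_eq_general a n x
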